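/- Given g ∈ ℂ, g ≠ 0, define recursively polynomials P_N by P_{−1} = 0, P₀ = 1, P_{N+1}(ν) = (i/ḡ)ν²P_N(ν) − (i/ḡ)ν²P_N'(ν) − (g/ḡ)P_{N−1}(ν). Then the functions Ψ^{(N)}(t) = P_N(1/t)e^{−1/t} for t > 0 and Ψ^{(N)}(t) = 0 for t ≤ 0 are smooth on (0,∞), extend continuously by 0 at t = 0, and satisfy i dΨ^{(N)}/dt = ḡ Ψ^{(N+1)}(t) + g Ψ^{(N−1)}(t) for all t > 0 and all N ≥ 0 (with Ψ^{(−1)} := 0). -/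

import Mathlib

open Polynomial Complex Filter Set

lemma poly_contDiff_aux (p : Polynomial ℂ) : ContDiff ℂ ⊤ (fun z : ℂ => p.eval z) := by
  induction p using Polynomial.induction_on' with
  | add p q hp hq => simpa using hp.add hq
  | monomial n a =>
      simpa [Polynomial.eval_monomial] using (contDiff_const (c := a)).mul (contDiff_id.pow n)

lemma poly_exp_tendsto_aux (p : Polynomial ℂ) :
    Tendsto (fun x : ℝ => p.eval (x : ℂ) * Complex.exp (-(x : ℂ))) atTop (nhds 0) := by
  set q : Polynomial ℝ :=
    ∑ i ∈ Finset.range (p.natDegree + 1), Polynomial.C ‖p.coeff i‖ * Polynomial.X ^ i with hq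
  apply squeeze_zero_norm' (a := fun x : ℝ => q.eval x / Real.exp x)
  · filter_upwards [eventually_ge_atTop (0 : ℝ)] with x hx
    have hnorm : ‖p.eval (x : ℂ) * Complex.exp (-(x : ℂ))‖
        = ‖p.eval (x : ℂ)‖ * Real.exp (-x) := by
      rw [norm_mul]
      congr 1
      simp [Complex.norm_exp]
    rw [hnorm, Real.exp_neg, div_eq_mul_inv]
    apply mul_le_mul_of_nonneg_right _ (by positivity)
    rw [Polynomial.eval_eq_sum_range (p := p) (x := (x : ℂ)), hq, Polynomial.eval_finset_sum]
    refine (norm_sum_le _ _).trans (Finset.sum_le_sum fun i _ => ?_)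
    simp only [Polynomial.eval_mul, Polynomial.eval_C, Polynomial.eval_pow, Polynomial.eval_X]
    rw [norm_mul, norm_pow]
    simp [Complex.norm_real, _root_.abs_of_nonneg hx]
  · exact q.tendsto_div_exp_atTop

/-- Non-uniqueness example for the minimalistic creation-annihilation system:
`P (k)` plays the role of `P_{k-1}` of the paper (so `P 0 = P₋₁ = 0`, `P 1 = P₀ = 1`),
and `Ψ (k)` is the wave function on sector `k - 1`, so that `Ψ 0 = Ψ^{(-1)} = 0`. -/
theorem toy_system_nonzero_smooth_solution
    (g : ℂ) (hg : g ≠ 0)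
    (P : ℕ → Polynomial ℂ)
    (hP0 : P 0 = 0) (hP1 : P 1 = 1)
    (hPrec : ∀ N : ℕ, P (N + 2) =
      C (Complex.I / (starRingEnd ℂ g)) * (X ^ 2 * P (N + 1))
      - C (Complex.I / (starRingEnd ℂ g)) * (X ^ 2 * derivative (P (N + 1)))
      - C (g / (starRingEnd ℂ g)) * P N)
    (Ψ : ℕ → ℝ → ℂ)
    (hΨ : ∀ k (t : ℝ), Ψ k t =
      if 0 < t then (P k).eval (1 / (t : ℂ)) * Complex.exp (-(1 / (t : ℂ))) else 0) :
    (∀ k, ContDiffOn ℝ (⊤ : ℕ∞) (Ψ k) (Set.Ioi (0 : ℝ)))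
    ∧ (∀ k, ContinuousAt (Ψ k) 0 ∧ Ψ k 0 = 0)
    ∧ (∀ N : ℕ, ∀ t : ℝ, 0 < t →
        Complex.I * deriv (Ψ (N + 1)) t
          = (starRingEnd ℂ g) * Ψ (N + 2) t + g * Ψ N t) := by
  have hzero : ∀ k, Ψ k 0 = 0 := fun k => by rw [hΨ]; simp
  have hpos : ∀ k (t : ℝ), 0 < t →
      Ψ k t = (P k).eval ((t : ℂ))⁻¹ * Complex.exp (-((t : ℂ))⁻¹) := by
    intro k t ht
    rw [hΨ, if_pos ht, one_div]
  refine ⟨?_, ?_, ?_⟩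
  · -- smoothness on Ioi 0
    intro k
    have hinv : ContDiffOn ℝ (⊤ : ℕ∞) (fun t : ℝ => ((t : ℂ))⁻¹) (Set.Ioi 0) := by
      apply ContDiffOn.inv
      · have h0 : ContDiff ℝ (⊤ : ℕ∞) (fun t : ℝ => (t : ℂ)) := Complex.ofRealCLM.contDiff
        exact h0.contDiffOn
      · intro x hx
        exact_mod_cast ne_of_gt (hx : (0:ℝ) < x)
    have h1 : ContDiffOn ℝ (⊤ : ℕ∞) (fun t : ℝ => (P k).eval ((t : ℂ))⁻¹) (Set.Ioi 0) :=
      (((poly_contDiff_aux (P k)).restrict_scalars (𝕜' := ℂ) ℝ).of_le le_top).comp_contDiffOn hinv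
    have h2 : ContDiffOn ℝ (⊤ : ℕ∞) (fun t : ℝ => Complex.exp (-((t : ℂ))⁻¹)) (Set.Ioi 0) :=
      ((Complex.contDiff_exp (𝕜 := ℂ)).restrict_scalars (𝕜' := ℂ) ℝ).comp_contDiffOn hinv.neg
    exact (h1.mul h2).congr fun t ht => hpos k t ht
  · -- continuity at 0
    intro k
    refine ⟨?_, hzero k⟩
    rw [ContinuousAt, hzero k, ← nhdsLE_sup_nhdsGT (0 : ℝ), tendsto_sup]
    constructor
    · refine Tendsto.congr' ?_ tendsto_const_nhds
      filter_upwards [eventually_nhdsWithin_of_forall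
        (fun t (ht : t ∈ Set.Iic (0:ℝ)) => ht)] with t ht
      exact ((hΨ k t).trans (if_neg (not_lt.mpr ht))).symm
    · have hcomp := (poly_exp_tendsto_aux (P k)).comp
        (tendsto_inv_nhdsGT_zero (𝕜 := ℝ))
      apply Tendsto.congr' _ hcomp
      filter_upwards [eventually_nhdsWithin_of_forall (fun t ht => ht)] with t ht
      rw [hpos k t ht]
      simp [Function.comp, Complex.ofReal_inv]
  · -- the ODE
    intro N t ht
    have hz : (t : ℂ) ≠ 0 := by exact_mod_cast ne_of_gt ht
    have hgc : (starRingEnd ℂ g) ≠ 0 := by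
      intro h
      apply hg
      have := congrArg (starRingEnd ℂ) h
      simpa using this
    set Q := P (N + 1) with hQ
    have hinv : HasDerivAt (fun z : ℂ => z⁻¹) (-((t:ℂ) ^ 2)⁻¹) (t : ℂ) := hasDerivAt_inv hz
    have hpoly : HasDerivAt (fun z : ℂ => Q.eval z⁻¹)
        ((derivative Q).eval ((t:ℂ))⁻¹ * -((t:ℂ) ^ 2)⁻¹) (t : ℂ) :=
      (Q.hasDerivAt ((t:ℂ))⁻¹).comp _ hinv
    have hexp : HasDerivAt (fun z : ℂ => Complex.exp (-z⁻¹))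
        (Complex.exp (-((t:ℂ))⁻¹) * --((t:ℂ) ^ 2)⁻¹
          ((t:ℂ) ^ 2)⁻¹) (t : ℂ) := by
      have := (Complex.hasDerivAt_exp (-((t:ℂ))⁻¹)).comp ((t:ℂ)) hinv.neg
      simpa [Function.comp_def, Pi.neg_def] using this
    have hprod := hpoly.mul hexp
    have hR : HasDerivAt (fun s : ℝ => Q.eval ((s:ℂ))⁻¹ * Complex.exp (-((s:ℂ))⁻¹)) _ t :=
      hprod.comp_ofReal
    have heq : Ψ (N + 1) =ᶠ[nhds t]
        fun s : ℝ => Q.eval ((s:ℂ))⁻¹ * Complex.exp (-((s:ℂ))⁻¹) := by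
      filter_upwards [isOpen_Ioi.mem_nhds ht] with s hs
      exact hpos (N + 1) s hs
    rw [heq.deriv_eq, hR.deriv]
    rw [hpos (N + 2) t ht, hpos N t ht, hPrec N, ← hQ]
    simp only [eval_sub, eval_mul, eval_C, eval_pow, eval_X]
    field_simp
    ring
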